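/- arXiv:2011.06344 — 4 statements merged into one kernel-verified Lean document; each statement's English description precedes it below -/
import Mathlib

section
/- Let f(x) = 4 - (x+1)^2 and M_p = ∫_0^1 f(x)^p dx. Then limsup_{p→∞} |M_p|^{1/p} = 3, and in particular limsup_{p→∞} |M_p|^{1/p} < max{|s| : s ∈ S} = 4, where S = {f(z) : f'(z) = 0} ∪ {f(0), f(1)}. This disproves the Müger–Tuset conjecture. -/
/-!
On `[0, 1]` we have `f x = (1 - x) (3 + x)`, so `3 (1 - x) ≤ f x ≤ 3` there. Integrating the
`p`-th powers gives `3 ^ p / (p + 1) ≤ M p ≤ 3 ^ p`, and since `(p + 1) ^ (1 / p) → 1` the `p`-th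
roots converge to `3`. The only critical point is `z = -1`, with value `4`, while `f 0 = 3` and
`f 1 = 0`.
-/

open Filter Real intervalIntegral Topology Set

lemma tendsto_natCast_add_one_rpow_one_div :
    Tendsto (fun p : ℕ => ((p : ℝ) + 1) ^ (1 / (p : ℝ))) atTop (𝓝 1) := by
  have h := (tendsto_rpow_div_mul_add 1 1 (-1) zero_ne_one).comp
    (tendsto_atTop_add_const_right _ 1 tendsto_natCast_atTop_atTop)
  refine h.congr fun p => ?_
  simp

lemma tendsto_rpow_one_div_of_le_of_le {c : ℝ} (hc : 0 ≤ c) {a : ℕ → ℝ}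
    (hlow : ∀ p : ℕ, c ^ p / ((p : ℝ) + 1) ≤ a p) (hup : ∀ p : ℕ, a p ≤ c ^ p) :
    Tendsto (fun p : ℕ => a p ^ (1 / (p : ℝ))) atTop (𝓝 c) := by
  have hroot : ∀ p : ℕ, p ≠ 0 → (c ^ p) ^ (1 / (p : ℝ)) = c := fun p hp => by
    rw [one_div, pow_rpow_inv_natCast hc hp]
  have hlim : Tendsto (fun p : ℕ => c / ((p : ℝ) + 1) ^ (1 / (p : ℝ))) atTop (𝓝 c) := by
    simpa [Pi.div_def] using
      (tendsto_const_nhds (x := c)).div tendsto_natCast_add_one_rpow_one_div one_ne_zero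
  refine tendsto_of_tendsto_of_tendsto_of_le_of_le' hlim tendsto_const_nhds ?_ ?_
  all_goals filter_upwards [eventually_ne_atTop 0] with p hp
  · calc c / ((p : ℝ) + 1) ^ (1 / (p : ℝ)) = (c ^ p / ((p : ℝ) + 1)) ^ (1 / (p : ℝ)) := by
          rw [div_rpow (by positivity) (by positivity), hroot p hp]
      _ ≤ a p ^ (1 / (p : ℝ)) := rpow_le_rpow (by positivity) (hlow p) (by positivity)
  · calc a p ^ (1 / (p : ℝ)) ≤ (c ^ p) ^ (1 / (p : ℝ)) :=
          rpow_le_rpow ((by positivity : (0 : ℝ) ≤ _).trans (hlow p)) (hup p) (by positivity)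
      _ = c := hroot p hp

lemma integral_mul_one_sub_pow (c : ℝ) (p : ℕ) :
    ∫ x in (0 : ℝ)..1, (c * (1 - x)) ^ p = c ^ p / ((p : ℝ) + 1) := by
  simp_rw [mul_pow, integral_const_mul]
  rw [integral_comp_sub_left (fun x => x ^ p), integral_pow]
  norm_num
  ring

lemma tendsto_integral_pow_rpow_one_div_of_le_of_le {g : ℝ → ℝ} (hg : ContinuousOn g (Icc 0 1))
    {c : ℝ} (hc : 0 ≤ c) (hlow : ∀ x ∈ Icc (0 : ℝ) 1, c * (1 - x) ≤ g x)
    (hup : ∀ x ∈ Icc (0 : ℝ) 1, g x ≤ c) :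
    Tendsto (fun p : ℕ => (∫ x in (0 : ℝ)..1, g x ^ p) ^ (1 / (p : ℝ))) atTop (𝓝 c) := by
  have hnonneg : ∀ x ∈ Icc (0 : ℝ) 1, 0 ≤ c * (1 - x) := fun x hx =>
    mul_nonneg hc (sub_nonneg.2 hx.2)
  have hint (p : ℕ) : IntervalIntegrable (fun x => g x ^ p) MeasureTheory.volume 0 1 :=
    ((hg.pow p).mono (by simp)).intervalIntegrable
  refine tendsto_rpow_one_div_of_le_of_le hc (fun p => ?_) (fun p => ?_)
  · rw [← integral_mul_one_sub_pow]
    refine integral_mono_on zero_le_one (Continuous.intervalIntegrable (by fun_prop) _ _)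
      (hint p) fun x hx => ?_
    exact pow_le_pow_left₀ (hnonneg x hx) (hlow x hx) p
  · calc ∫ x in (0 : ℝ)..1, g x ^ p ≤ ∫ _ in (0 : ℝ)..1, c ^ p :=
          integral_mono_on zero_le_one (hint p) intervalIntegrable_const fun x hx =>
            pow_le_pow_left₀ ((hnonneg x hx).trans (hlow x hx)) (hup x hx) p
      _ = c ^ p := by simp

lemma norm_integral_four_sub_sq_pow (p : ℕ) :
    ‖∫ x in (0 : ℝ)..1, (4 - ((x : ℂ) + 1) ^ 2) ^ p‖ =
      ∫ x in (0 : ℝ)..1, (4 - (x + 1) ^ 2) ^ p := by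
  have hnonneg : 0 ≤ ∫ x in (0 : ℝ)..1, (4 - (x + 1) ^ 2) ^ p :=
    integral_nonneg zero_le_one fun x hx => pow_nonneg (by nlinarith [hx.1, hx.2]) p
  rw [← Complex.norm_of_nonneg hnonneg, ← integral_ofReal]
  norm_cast

lemma tendsto_integral_four_sub_sq_pow_rpow_one_div :
    Tendsto (fun p : ℕ => (∫ x in (0 : ℝ)..1, (4 - (x + 1) ^ 2) ^ p) ^ (1 / (p : ℝ)))
      atTop (𝓝 3) :=
  tendsto_integral_pow_rpow_one_div_of_le_of_le (by fun_prop) zero_le_three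
    (fun x hx => by nlinarith [hx.1, hx.2]) (fun x hx => by nlinarith [hx.1, hx.2])

lemma critical_values_four_sub_sq :
    {w | ∃ z : ℂ, deriv (fun z : ℂ => 4 - (z + 1) ^ 2) z = 0 ∧ 4 - (z + 1) ^ 2 = w} = {4} := by
  ext w
  constructor
  · rintro ⟨z, hz, rfl⟩
    have hz' : z + 1 = 0 := by simpa using hz
    simp [hz']
  · rintro rfl
    exact ⟨-1, by simp, by norm_num⟩

theorem stmt_3 (f : ℂ → ℂ) (hf : ∀ z, f z = 4 - (z + 1)^2)
    (M : ℕ → ℂ) (hM : ∀ p : ℕ, M p = ∫ x in (0:ℝ)..1, (f x) ^ p)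
    (S : Set ℂ) (hS : S = {w | ∃ z : ℂ, deriv f z = 0 ∧ f z = w} ∪ {f 0, f 1}) :
    Filter.limsup (fun p : ℕ => ‖M p‖ ^ (1 / (p : ℝ))) Filter.atTop = 3 ∧
    IsGreatest ((fun z : ℂ => ‖z‖) '' S) 4 ∧
    Filter.limsup (fun p : ℕ => ‖M p‖ ^ (1 / (p : ℝ))) Filter.atTop < 4 := by
  obtain rfl : f = fun z => 4 - (z + 1) ^ 2 := funext hf
  obtain rfl : M = fun p => ∫ x in (0 : ℝ)..1, (4 - ((x : ℂ) + 1) ^ 2) ^ p := funext hM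
  subst hS
  have hlimsup : limsup (fun p : ℕ =>
      ‖∫ x in (0 : ℝ)..1, (4 - ((x : ℂ) + 1) ^ 2) ^ p‖ ^ (1 / (p : ℝ))) atTop = 3 := by
    simp only [norm_integral_four_sub_sq_pow]
    exact tendsto_integral_four_sub_sq_pow_rpow_one_div.limsup_eq
  refine ⟨hlimsup, ?_, by rw [hlimsup]; norm_num⟩
  rw [critical_values_four_sub_sq]
  refine ⟨by simp, ?_⟩
  rintro _ ⟨w, hw, rfl⟩
  simp only [mem_union, mem_singleton_iff, mem_insert_iff] at hw
  rcases hw with rfl | rfl | rfl <;> norm_num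
end

section
/- If f is a polynomial with real coefficients, not identically zero, and M_p = ∫_0^1 f(x)^p dx, then limsup_{p→∞} |M_p|^{1/p} = sup_{x∈[0,1]} |f(x)|. -/
/-!
Let `S` be the maximum of `|f|` on `[0, 1]`. The bound `|M_p| ≤ S ^ p` gives `limsup ≤ S`.
Conversely, for `0 ≤ t < S` the points of `(0, 1)` where `|f| > t` form a nonempty open set, of
some measure `δ > 0`; for even `p` the integrand `f ^ p` is nonnegative, so `M_p ≥ δ t ^ p`, and
`(δ t ^ p) ^ (1 / p) → t`.
-/

open Filter MeasureTheory Set Topology Interval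

lemma tendsto_mul_pow_rpow_one_div {δ t : ℝ} (hδ : 0 < δ) (ht : 0 ≤ t) :
    Tendsto (fun p : ℕ => (δ * t ^ p) ^ (1 / (p : ℝ))) atTop (𝓝 t) := by
  have hδ_root : Tendsto (fun p : ℕ => δ ^ (1 / (p : ℝ))) atTop (𝓝 1) := by
    simpa [Function.comp_def] using ((Real.continuousAt_const_rpow hδ.ne').tendsto.comp
      tendsto_one_div_atTop_nhds_zero_nat)
  refine (hδ_root.mul_const t |>.congr' ?_).trans (by rw [one_mul])
  filter_upwards [eventually_ne_atTop 0] with p hp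
  rw [Real.mul_rpow hδ.le (by positivity), ← Real.rpow_natCast, ← Real.rpow_mul ht,
    mul_one_div_cancel (by exact_mod_cast hp), Real.rpow_one]

section

variable {g : ℝ → ℝ} {a b S : ℝ}

lemma abs_integral_pow_rpow_le (hab : a ≤ b) (hS : ∀ x ∈ Icc a b, |g x| ≤ S) (p : ℕ) :
    |∫ x in a..b, g x ^ p| ^ (1 / (p : ℝ)) ≤ ((b - a) * S ^ p) ^ (1 / (p : ℝ)) := by
  refine Real.rpow_le_rpow (abs_nonneg _) ?_ (by positivity)
  have hbound : ∀ x ∈ Ι a b, ‖g x ^ p‖ ≤ S ^ p := fun x hx => by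
    rw [Real.norm_eq_abs, abs_pow]
    exact pow_le_pow_left₀ (abs_nonneg _) (hS x (Ioc_subset_Icc_self (uIoc_of_le hab ▸ hx))) p
  simpa [abs_of_nonneg (sub_nonneg.2 hab), mul_comm] using
    intervalIntegral.norm_integral_le_of_norm_le_const hbound

lemma tendsto_sub_mul_pow_rpow_one_div (hab : a < b) (hS : ∀ x ∈ Icc a b, |g x| ≤ S) :
    Tendsto (fun p : ℕ => ((b - a) * S ^ p) ^ (1 / (p : ℝ))) atTop (𝓝 S) :=
  tendsto_mul_pow_rpow_one_div (sub_pos.2 hab)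
    ((abs_nonneg _).trans (hS a (left_mem_Icc.2 hab.le)))

lemma isBoundedUnder_abs_integral_pow_rpow (hab : a < b) (hS : ∀ x ∈ Icc a b, |g x| ≤ S) :
    IsBoundedUnder (· ≤ ·) atTop (fun p : ℕ => |∫ x in a..b, g x ^ p| ^ (1 / (p : ℝ))) :=
  (tendsto_sub_mul_pow_rpow_one_div hab hS).isBoundedUnder_le.mono_le
    (.of_forall (abs_integral_pow_rpow_le hab.le hS))

lemma limsup_abs_integral_pow_rpow_le (hab : a < b) (hS : ∀ x ∈ Icc a b, |g x| ≤ S) :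
    limsup (fun p : ℕ => |∫ x in a..b, g x ^ p| ^ (1 / (p : ℝ))) atTop ≤ S := by
  have hlim := tendsto_sub_mul_pow_rpow_one_div hab hS
  rw [← hlim.limsup_eq]
  exact limsup_le_limsup (.of_forall (abs_integral_pow_rpow_le hab.le hS))
    (isCoboundedUnder_le_of_le atTop fun p => by positivity) hlim.isBoundedUnder_le

lemma exists_pos_mul_pow_le_integral_pow (hg : Continuous g) (hab : a < b) {x₀ t : ℝ}
    (hx₀ : x₀ ∈ Icc a b) (ht : 0 ≤ t) (htx₀ : t < |g x₀|) :
    ∃ δ > 0, ∀ p, Even p → δ * t ^ p ≤ ∫ x in a..b, g x ^ p := by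
  set U := {x | t < |g x|} ∩ Ioo a b
  have hU_open : IsOpen U := (isOpen_lt continuous_const hg.abs).inter isOpen_Ioo
  have hU_ne : U.Nonempty := mem_closure_iff.1 (closure_Ioo hab.ne ▸ hx₀) _
    (isOpen_lt continuous_const hg.abs) htx₀
  have hU_fin : volume U ≠ ⊤ :=
    (measure_mono inter_subset_right).trans_lt measure_Ioo_lt_top |>.ne
  refine ⟨volume.real U, ENNReal.toReal_pos (hU_open.measure_pos volume hU_ne).ne' hU_fin,
    fun p hp => ?_⟩
  have hint : IntegrableOn (fun x => g x ^ p) (Ioc a b) := (hg.pow p).integrableOn_Ioc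
  calc volume.real U * t ^ p = ∫ _ in U, t ^ p := by rw [setIntegral_const, smul_eq_mul]
    _ ≤ ∫ x in U, g x ^ p :=
        setIntegral_mono_on (integrableOn_const hU_fin)
          (hint.mono_set (inter_subset_right.trans Ioo_subset_Ioc_self)) hU_open.measurableSet
          fun x hx => hp.pow_abs (g x) ▸ pow_le_pow_left₀ ht hx.1.le p
    _ ≤ ∫ x in Ioc a b, g x ^ p :=
        setIntegral_mono_set hint (.of_forall fun x => hp.pow_nonneg _)
          (inter_subset_right.trans Ioo_subset_Ioc_self).eventuallyLE
    _ = ∫ x in a..b, g x ^ p := (intervalIntegral.integral_of_le hab.le).symm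

lemma le_limsup_abs_integral_pow_rpow (hg : Continuous g) (hab : a < b)
    (hS : ∀ x ∈ Icc a b, |g x| ≤ S) {x₀ : ℝ} (hx₀ : x₀ ∈ Icc a b) :
    |g x₀| ≤ limsup (fun p : ℕ => |∫ x in a..b, g x ^ p| ^ (1 / (p : ℝ))) atTop := by
  refine le_of_forall_lt_imp_le_of_dense fun c hc => le_limsup_of_frequently_le ?_
    (isBoundedUnder_abs_integral_pow_rpow hab hS)
  rcases lt_or_ge c 0 with hc0 | hc0
  · exact .of_forall fun p => hc0.le.trans (by positivity)
  obtain ⟨t, hct, htx₀⟩ := exists_between hc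
  have ht : 0 ≤ t := hc0.trans hct.le
  obtain ⟨δ, hδ, hδt⟩ := exists_pos_mul_pow_le_integral_pow hg hab hx₀ ht htx₀
  have hct_eventually := (tendsto_mul_pow_rpow_one_div hδ ht).eventually_const_lt hct
  refine (Nat.frequently_even.and_eventually hct_eventually).mono fun p ⟨hp, hcp⟩ => ?_
  exact hcp.le.trans <| Real.rpow_le_rpow (mul_nonneg hδ.le (pow_nonneg ht p))
    ((hδt p hp).trans (le_abs_self _)) (by positivity)

end

theorem limsup_abs_integral_pow_rpow_eq_sSup {g : ℝ → ℝ} (hg : Continuous g) {a b : ℝ}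
    (hab : a < b) :
    limsup (fun p : ℕ => |∫ x in a..b, g x ^ p| ^ (1 / (p : ℝ))) atTop =
      sSup ((fun x => |g x|) '' Icc a b) := by
  obtain ⟨x₀, hx₀, hmax⟩ :=
    isCompact_Icc.exists_isMaxOn (nonempty_Icc.2 hab.le) hg.abs.continuousOn
  have hS : ∀ x ∈ Icc a b, |g x| ≤ |g x₀| := fun x hx => hmax hx
  rw [IsGreatest.csSup_eq ⟨mem_image_of_mem _ hx₀, forall_mem_image.2 hS⟩]
  exact (limsup_abs_integral_pow_rpow_le hab hS).antisymm
    (le_limsup_abs_integral_pow_rpow hg hab hS hx₀)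

theorem stmt_4_general (f : Polynomial ℝ)
    (M : ℕ → ℝ) (hM : ∀ p : ℕ, M p = ∫ x in (0:ℝ)..1, (f.eval x) ^ p) :
    Filter.limsup (fun p : ℕ => |M p| ^ (1 / (p : ℝ))) Filter.atTop
      = sSup ((fun x : ℝ => |f.eval x|) '' Set.Icc 0 1) := by
  simp_rw [hM]
  exact limsup_abs_integral_pow_rpow_eq_sSup f.continuous zero_lt_one

theorem stmt_4 (f : Polynomial ℝ) (hf : f ≠ 0)
    (M : ℕ → ℝ) (hM : ∀ p : ℕ, M p = ∫ x in (0:ℝ)..1, (f.eval x) ^ p) :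
    Filter.limsup (fun p : ℕ => |M p| ^ (1 / (p : ℝ))) Filter.atTop
      = sSup ((fun x : ℝ => |f.eval x|) '' Set.Icc 0 1) :=
  stmt_4_general f M hM
end

section
/- Let f(z) = 1 - (z + i/2)^2 and M_p = ∫_{-1}^1 f(x)^p dx. Then limsup_{p→∞} |M_p|^{1/p} < sup_{x∈[-1,1]} |f(x)|; specifically the limsup is at most √17/4 while the supremum equals 5/4. -/
/-!
By Cauchy's theorem the integral of `f(x)^p` over `[-1, 1]` equals the integral over the other three
sides of the rectangle `[-1, 1] × [-1/2, 0]`. On the bottom side `f(x - i/2) = 1 - x²` has modulus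
at most `1`; on the vertical sides, with `t = y + 1/2 ∈ [0, 1/2]`, `|f(±1 + iy)|² = t⁴ + 4t² ≤ 17/16`.
Hence `|M_p| ≤ 2 + (√17/4)^p ≤ 3 (√17/4)^p`. On the other hand `|f(x)|² = (5/4 - x²)² + x²`, which
on `[-1, 1]` is largest at `x = 0`, where it equals `25/16`.
-/

open Complex Filter Set Topology intervalIntegral

lemma limsup_rpow_one_div_le_of_le_mul_pow {u : ℕ → ℝ} (hu : ∀ n, 0 ≤ u n) {C r : ℝ}
    (hC : 0 < C) (hr : 0 ≤ r) (hbound : ∀ n, u n ≤ C * r ^ n) :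
    limsup (fun n : ℕ => u n ^ (1 / (n : ℝ))) atTop ≤ r := by
  have hlim : Tendsto (fun n : ℕ => C ^ (1 / (n : ℝ)) * r) atTop (𝓝 r) := by
    simpa using ((Real.continuousAt_const_rpow hC.ne').tendsto.comp
      (tendsto_const_div_atTop_nhds_zero_nat 1)).mul_const r
  have hev : ∀ᶠ n : ℕ in atTop, u n ^ (1 / (n : ℝ)) ≤ C ^ (1 / (n : ℝ)) * r := by
    filter_upwards [eventually_ne_atTop 0] with n hn
    calc u n ^ (1 / (n : ℝ)) ≤ (C * r ^ n) ^ (1 / (n : ℝ)) :=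
          Real.rpow_le_rpow (hu n) (hbound n) (by positivity)
      _ = C ^ (1 / (n : ℝ)) * r := by
          rw [Real.mul_rpow hC.le (by positivity), one_div, Real.pow_rpow_inv_natCast hr hn]
  calc limsup (fun n : ℕ => u n ^ (1 / (n : ℝ))) atTop
      ≤ limsup (fun n : ℕ => C ^ (1 / (n : ℝ)) * r) atTop :=
        limsup_le_limsup hev (isCoboundedUnder_le_of_le atTop fun n => Real.rpow_nonneg (hu n) _)
          hlim.isBoundedUnder_le
    _ = r := hlim.limsup_eq

lemma norm_integral_le_of_norm_le_const_on_Icc {E : Type*} [NormedAddCommGroup E]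
    [NormedSpace ℝ E] {h : ℝ → E} {a b K : ℝ} (hab : a ≤ b)
    (hK : ∀ t ∈ Icc a b, ‖h t‖ ≤ K) : ‖∫ t in a..b, h t‖ ≤ K * (b - a) := by
  simpa [abs_of_nonneg (sub_nonneg.2 hab)] using norm_integral_le_of_norm_le_const
    fun t ht => hK t (Ioc_subset_Icc_self (uIoc_of_le hab ▸ ht))

lemma norm_integral_add_mul_I_le_of_differentiable {E : Type*} [NormedAddCommGroup E]
    [NormedSpace ℂ E] [CompleteSpace E] {g : ℂ → E} (hg : Differentiable ℂ g)
    {a b c d : ℝ} (hab : a ≤ b) (hcd : c ≤ d) {A B : ℝ}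
    (hA : ∀ x ∈ Icc a b, ‖g (x + c * I)‖ ≤ A)
    (hBa : ∀ y ∈ Icc c d, ‖g (a + y * I)‖ ≤ B) (hBb : ∀ y ∈ Icc c d, ‖g (b + y * I)‖ ≤ B) :
    ‖∫ x in a..b, g (x + d * I)‖ ≤ A * (b - a) + 2 * B * (d - c) := by
  have hcauchy := integral_boundary_rect_eq_zero_of_differentiableOn g (a + c * I) (b + d * I)
    hg.differentiableOn
  simp only [add_re, ofReal_re, mul_re, I_re, mul_zero, ofReal_im, I_im, mul_one, sub_self,
    add_zero, add_im, mul_im, zero_add] at hcauchy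
  have hshift : ∫ x in a..b, g (x + d * I) = (∫ x in a..b, g (x + c * I))
      + I • (∫ y in c..d, g (b + y * I)) - I • (∫ y in c..d, g (a + y * I)) := by
    rw [← sub_eq_zero, ← neg_eq_zero, ← hcauchy]
    abel
  rw [hshift]
  calc _ ≤ ‖∫ x in a..b, g (x + c * I)‖ + ‖∫ y in c..d, g (b + y * I)‖
        + ‖∫ y in c..d, g (a + y * I)‖ := by
        refine (norm_sub_le_of_le (norm_add_le _ _) le_rfl).trans_eq ?_
        simp only [norm_smul, norm_I, one_mul]
    _ ≤ A * (b - a) + B * (d - c) + B * (d - c) := by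
        gcongr <;> exact norm_integral_le_of_norm_le_const_on_Icc (by assumption) ‹_›
    _ = A * (b - a) + 2 * B * (d - c) := by ring

lemma norm_le_of_re_sq_add_im_sq_le {z : ℂ} {r : ℝ} (hr : 0 ≤ r)
    (h : z.re ^ 2 + z.im ^ 2 ≤ r ^ 2) : ‖z‖ ≤ r := by
  rw [← sq_le_sq₀ (norm_nonneg z) hr, Complex.sq_norm, normSq_apply]
  linarith

lemma norm_one_sub_ofReal_sq_le_one {x : ℝ} (hx : x ∈ Icc (-1 : ℝ) 1) :
    ‖1 - (x : ℂ) ^ 2‖ ≤ 1 := by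
  apply norm_le_of_re_sq_add_im_sq_le zero_le_one
  have hx2 : x ^ 2 ≤ 1 := by nlinarith [hx.1, hx.2]
  simp only [sq, sub_re, one_re, mul_re, ofReal_re, ofReal_im, mul_zero, sub_zero, sub_im, one_im,
    mul_im, zero_mul, add_zero, sub_self]
  nlinarith [mul_nonneg (sq_nonneg x) (sub_nonneg.2 hx2)]

lemma norm_one_sub_add_mul_I_sq_le {s t : ℝ} (hs : s ^ 2 = 1) (ht₀ : 0 ≤ t) (ht : t ≤ 1 / 2) :
    ‖1 - ((s : ℂ) + t * I) ^ 2‖ ≤ √17 / 4 := by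
  apply norm_le_of_re_sq_add_im_sq_le (by positivity)
  rw [div_pow, Real.sq_sqrt (by norm_num)]
  have ht2 : t ^ 2 ≤ 1 / 4 := by nlinarith
  simp only [sq, sub_re, one_re, mul_re, add_re, ofReal_re, I_re, mul_zero, ofReal_im, I_im, mul_one,
    sub_self, add_zero, add_im, mul_im, zero_add, sub_im, one_im, zero_sub, neg_add_rev]
  nlinarith

lemma norm_one_sub_add_half_I_sq_le {x : ℝ} (hx : x ∈ Icc (-1 : ℝ) 1) :
    ‖1 - ((x : ℂ) + I / 2) ^ 2‖ ≤ 5 / 4 := by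
  apply norm_le_of_re_sq_add_im_sq_le (by norm_num)
  have hx2 : x ^ 2 ≤ 1 := by nlinarith [hx.1, hx.2]
  simp only [sq, sub_re, one_re, mul_re, add_re, ofReal_re, div_ofNat_re, I_re, zero_div, add_zero,
    add_im, ofReal_im, div_ofNat_im, I_im, one_div, zero_add, sub_im, one_im, mul_im, zero_sub,
    neg_add_rev]
  nlinarith [mul_nonneg (sq_nonneg x) (sub_nonneg.2 hx2)]

lemma isGreatest_norm_one_sub_add_half_I_sq :
    IsGreatest ((fun x : ℝ => ‖1 - ((x : ℂ) + I / 2) ^ 2‖) '' Icc (-1) 1) (5 / 4) := by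
  refine ⟨⟨0, by norm_num, ?_⟩, ?_⟩
  · have h0 : (1 : ℂ) - (((0 : ℝ) : ℂ) + I / 2) ^ 2 = ((5 / 4 : ℝ) : ℂ) := by
      push_cast
      linear_combination (-1 / 4 : ℂ) * I_sq
    simp only [h0, norm_real, Real.norm_of_nonneg (by norm_num : (0 : ℝ) ≤ 5 / 4)]
  · rintro _ ⟨x, hx, rfl⟩
    exact norm_one_sub_add_half_I_sq_le hx

lemma norm_integral_one_sub_add_half_I_sq_pow_le (p : ℕ) :
    ‖∫ x in (-1 : ℝ)..1, (1 - ((x : ℂ) + I / 2) ^ 2) ^ p‖ ≤ 3 * (√17 / 4) ^ p := by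
  have hside : ∀ s : ℝ, s ^ 2 = 1 → ∀ y ∈ Icc (-1 / 2 : ℝ) 0,
      ‖(1 - ((s : ℂ) + y * I + I / 2) ^ 2) ^ p‖ ≤ (√17 / 4) ^ p := fun s hs y hy => by
    rw [norm_pow, show (s : ℂ) + y * I + I / 2 = s + ((y + 1 / 2 : ℝ) : ℂ) * I by push_cast; ring]
    gcongr
    exact norm_one_sub_add_mul_I_sq_le hs (by linarith [hy.1]) (by linarith [hy.2])
  have hbottom : ∀ x ∈ Icc (-1 : ℝ) 1,
      ‖(1 - ((x : ℂ) + ((-1 / 2 : ℝ) : ℂ) * I + I / 2) ^ 2) ^ p‖ ≤ 1 := fun x hx => by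
    rw [norm_pow, show (x : ℂ) + ((-1 / 2 : ℝ) : ℂ) * I + I / 2 = x by push_cast; ring]
    exact pow_le_one₀ (norm_nonneg _) (norm_one_sub_ofReal_sq_le_one hx)
  have h := norm_integral_add_mul_I_le_of_differentiable (g := fun z => (1 - (z + I / 2) ^ 2) ^ p)
    (by fun_prop) (by norm_num : (-1 : ℝ) ≤ 1) (by norm_num : (-1 / 2 : ℝ) ≤ 0) hbottom
    (hside (-1) (by norm_num)) (hside 1 (by norm_num))
  have hc : 1 ≤ (√17 / 4) ^ p := one_le_pow₀ (by
    rw [le_div_iff₀ (by norm_num), one_mul, Real.le_sqrt' (by norm_num)]; norm_num)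
  simp only [ofReal_zero, zero_mul, add_zero] at h
  linarith

theorem stmt_9 (f : ℂ → ℂ) (hf : ∀ z, f z = 1 - (z + Complex.I / 2)^2)
    (M : ℕ → ℂ) (hM : ∀ p : ℕ, M p = ∫ x in (-1:ℝ)..1, (f x) ^ p) :
    Filter.limsup (fun p : ℕ => ‖M p‖ ^ (1 / (p : ℝ))) Filter.atTop ≤ Real.sqrt 17 / 4 ∧
    sSup ((fun x : ℝ => ‖f x‖) '' Set.Icc (-1 : ℝ) 1) = 5 / 4 ∧
    Filter.limsup (fun p : ℕ => ‖M p‖ ^ (1 / (p : ℝ))) Filter.atTop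
      < sSup ((fun x : ℝ => ‖f x‖) '' Set.Icc (-1 : ℝ) 1) := by
  obtain rfl : f = fun z => 1 - (z + I / 2) ^ 2 := funext hf
  have hsup := isGreatest_norm_one_sub_add_half_I_sq.csSup_eq
  have hlimsup : limsup (fun p : ℕ => ‖M p‖ ^ (1 / (p : ℝ))) atTop ≤ √17 / 4 :=
    limsup_rpow_one_div_le_of_le_mul_pow (fun _ => norm_nonneg _) three_pos (by positivity)
      fun p => hM p ▸ norm_integral_one_sub_add_half_I_sq_pow_le p
  refine ⟨hlimsup, hsup, hsup ▸ hlimsup.trans_lt ?_⟩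
  rw [div_lt_div_iff_of_pos_right (by norm_num), Real.sqrt_lt' (by norm_num)]
  norm_num
end

section
/- Let f(z) = 1 - (z + i/2)^2. Then there exists an open set U containing f([-1,1]) and a holomorphic function h : U → ℂ such that f(h(w)) = w for all w ∈ U and h(f(x)) = x for all real x ∈ [-1,1]. -/
theorem stmt_11 (f : ℂ → ℂ) (hf : ∀ z, f z = 1 - (z + Complex.I / 2)^2) :
    ∃ (U : Set ℂ) (h : ℂ → ℂ), IsOpen U ∧
      ((fun x : ℝ => f x) '' Set.Icc (-1 : ℝ) 1) ⊆ U ∧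
      DifferentiableOn ℂ h U ∧
      (∀ w ∈ U, f (h w) = w) ∧
      (∀ x ∈ Set.Icc (-1 : ℝ) 1, h (f x) = x) := by
  refine ⟨{w | w - 1 ∈ Complex.slitPlane}, fun w => Complex.I * (w - 1) ^ (2⁻¹ : ℂ) - Complex.I / 2,
    Complex.isOpen_slitPlane.preimage (continuous_id.sub continuous_const), ?_, ?_, ?_, ?_⟩
  · rintro w ⟨x, hx, rfl⟩
    have hc : f x - 1 = Complex.ofReal (1/4 - x^2) + Complex.ofReal (-x) * Complex.I := by
      rw [hf]; push_cast; ring_nf; rw [Complex.I_sq]; ring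
    simp only [Set.mem_setOf_eq, Complex.mem_slitPlane_iff, hc]
    rcases eq_or_ne x 0 with rfl | hx0
    · left; norm_num
    · right; simp [hx0, ← Complex.ofReal_pow]
  · intro w hw
    apply DifferentiableAt.differentiableWithinAt
    have h1 : DifferentiableAt ℂ (fun w : ℂ => (w - 1) ^ (2⁻¹ : ℂ)) w :=
      DifferentiableAt.cpow (differentiableAt_id.sub (differentiableAt_const 1))
        (differentiableAt_const _) hw
    exact (h1.const_mul _).sub (differentiableAt_const _)
  · intro w hw
    rw [hf]
    have h2 : ((w - 1) ^ (2⁻¹ : ℂ)) * ((w - 1) ^ (2⁻¹ : ℂ)) = w - 1 := by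
      rw [← pow_two]; exact Complex.cpow_ofNat_inv_pow _ 2
    ring_nf
    ring_nf at h2
    rw [h2]
    simp [Complex.I_sq]
  · intro x hx
    have key : f x - 1 = ((1:ℂ)/2 - Complex.I * x) ^ (2:ℕ) := by
      rw [hf]; ring_nf; rw [Complex.I_sq]; ring
    have hre : (0:ℝ) < ((1:ℂ)/2 - Complex.I * x).re := by
      simp [Complex.sub_re, Complex.mul_re]
    show Complex.I * (f x - 1) ^ (2⁻¹ : ℂ) - Complex.I / 2 = x
    rw [key, Complex.sq_cpow_two_inv hre]
    ring_nf
    rw [Complex.I_sq]; ring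
end
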